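/- arXiv:1811.01649 — 2 statements merged into one kernel-verified Lean document; each statement's English description precedes it below -/
import Mathlib

section
/- Let H = (F,G) be a formal transformation with invertible Jacobian mapping an m-infinite type hypersurface in normal form into another such. Then G_z(0,w) = O(w^{m+1}), i.e. the coefficient of z in G vanishes to order at least m+1 in w. -/
/-!
STATEMENT 0. A formal invertible transformation `H = (F, G)` of `(ℂ², 0)` mapping a
hypersurface `M : w = τ + i τ^m (ε z χ + ∑_{k,l≥2} Θ_{kl}(τ) z^k χ^l)` (complexified
defining equation, normal coordinates, `χ = z̄`, `τ = w̄`) into another such hypersurface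
`M*` satisfies `G(z, 0) = 0`, i.e. `G = O(w)`.
-/

noncomputable section

open scoped Classical

/-- Coefficientwise substitution of a tuple of multivariate power series into a power
series in `Fin k` variables.  (When each `a i` has vanishing constant term, only finitely
many terms contribute to each coefficient, and this is the usual composition.) -/
def msubst {σ : Type} {k : ℕ} (a : Fin k → MvPowerSeries σ ℂ)
    (f : MvPowerSeries (Fin k) ℂ) : MvPowerSeries σ ℂ :=
  fun d => ∑' e : Fin k →₀ ℕ,
    (MvPowerSeries.coeff e f) * MvPowerSeries.coeff d (∏ i, a i ^ e i)

/-- The exponent `(k, l, j)` for the monomial `z^k χ^l τ^j` in three variables. -/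
def idx (k l j : ℕ) : Fin 3 →₀ ℕ :=
  Finsupp.single 0 k + Finsupp.single 1 l + Finsupp.single 2 j

/-- `ρ` is the complex defining series, in admissible normal coordinates, of an
`m`-infinite type hypersurface: `w = ρ(z, χ, τ) = τ + i τ^m (ε z χ + ∑_{k,l≥2} Θ_{kl}(τ) z^k χ^l)`. -/
def IsDefiningSeries (m : ℕ) (ε : ℤ) (Θ : ℕ → ℕ → PowerSeries ℂ)
    (ρ : MvPowerSeries (Fin 3) ℂ) : Prop :=
  ∀ k l j : ℕ, MvPowerSeries.coeff (idx k l j) ρ =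
    if k = 0 ∧ l = 0 then (if j = 1 then 1 else 0)
    else if k = 1 ∧ l = 1 then (if j = m then Complex.I * (ε : ℂ) else 0)
    else if 2 ≤ k ∧ 2 ≤ l then
      (if m ≤ j then Complex.I * PowerSeries.coeff (j - m) (Θ k l) else 0)
    else 0

/-- The conjugate formal power series (coefficients conjugated). -/
def conj2 (F : MvPowerSeries (Fin 2) ℂ) : MvPowerSeries (Fin 2) ℂ :=
  MvPowerSeries.map (starRingEnd ℂ) F

/-- The complexified mapping condition `H(M) ⊂ M*` for a formal map `H = (F, G)`:
`G(z, ρ(z,χ,τ)) = ρ*(F(z, ρ(z,χ,τ)), F̄(χ,τ), Ḡ(χ,τ))` as formal power series in `(z,χ,τ)`. -/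
def MapsInto (F G : MvPowerSeries (Fin 2) ℂ) (ρ ρs : MvPowerSeries (Fin 3) ℂ) : Prop :=
  msubst ![MvPowerSeries.X 0, ρ] G =
    msubst ![msubst ![MvPowerSeries.X 0, ρ] F,
             msubst ![MvPowerSeries.X 1, MvPowerSeries.X 2] (conj2 F),
             msubst ![MvPowerSeries.X 1, MvPowerSeries.X 2] (conj2 G)] ρs

/-!
Compare the coefficients of `z τ^j χ⁰` on both sides of the mapping identity. Setting `χ = 0`
turns `ρ` into `τ` (`ρ - τ` has positive `χ`-order), so on the left this coefficient is the
coefficient of `z w^j` in `G`. On the right, `F̄(χ, τ)` and `Ḡ(χ, τ)` are free of `z` and vanish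
at the origin, so they have order `≥ 1` in `(χ, τ)`, i.e. for the weight `![0, 1, 1]`. The
monomial `τ` of `ρ*` contributes `Ḡ`, which has no `z`-term, and every other monomial of `ρ*` is
`z^k χ^l τ^n` with `l ≥ 1` and `n ≥ m`, so it contributes a series of order `≥ m + 1 > j` in
`(χ, τ)`.
-/

open MvPowerSeries Finsupp

namespace idx

lemma apply_zero (k l j : ℕ) : idx k l j 0 = k := by simp [idx]
lemma apply_one (k l j : ℕ) : idx k l j 1 = l := by simp [idx]
lemma apply_two (k l j : ℕ) : idx k l j 2 = j := by simp [idx]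

lemma eq_iff {k l j k' l' j' : ℕ} :
    idx k l j = idx k' l' j' ↔ k = k' ∧ l = l' ∧ j = j' := by
  refine ⟨fun h => ?_, fun ⟨h0, h1, h2⟩ => h0 ▸ h1 ▸ h2 ▸ rfl⟩
  exact ⟨by simpa [apply_zero] using congr($h 0), by simpa [apply_one] using congr($h 1),
    by simpa [apply_two] using congr($h 2)⟩

lemma eta (d : Fin 3 →₀ ℕ) : idx (d 0) (d 1) (d 2) = d := by
  ext i; fin_cases i <;> simp [apply_zero, apply_one, apply_two]

lemma single_two (j : ℕ) : single 2 j = idx 0 0 j := by simp [idx]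

end idx

namespace MvPowerSeries

variable {σ R : Type*} [CommSemiring R] (w : σ → ℕ)

lemma weightedOrder_le_of_dvd {f g : MvPowerSeries σ R} (h : f ∣ g) :
    f.weightedOrder w ≤ g.weightedOrder w := by
  obtain ⟨c, rfl⟩ := h
  exact le_self_add.trans (le_weightedOrder_mul w)

lemma nat_le_weightedOrder_pow {f : MvPowerSeries σ R} (hf : 1 ≤ f.weightedOrder w) (n : ℕ) :
    (n : ℕ∞) ≤ (f ^ n).weightedOrder w :=
  calc (n : ℕ∞) = n • 1 := by simp
    _ ≤ n • f.weightedOrder w := nsmul_le_nsmul_right hf n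
    _ ≤ (f ^ n).weightedOrder w := le_weightedOrder_pow w n

end MvPowerSeries

section Monomials

variable {R : Type*} [CommSemiring R]

lemma X_zero_pow_mul_X_two_pow (a b : ℕ) :
    (X 0 ^ a * X 2 ^ b : MvPowerSeries (Fin 3) R) = monomial (idx a 0 b) 1 := by
  rw [X_pow_eq, X_pow_eq, monomial_mul_monomial, one_mul, idx, single_zero, add_zero]

lemma X_one_pow_mul_X_two_pow (a b : ℕ) :
    (X 1 ^ a * X 2 ^ b : MvPowerSeries (Fin 3) R) = monomial (idx 0 a b) 1 := by
  rw [X_pow_eq, X_pow_eq, monomial_mul_monomial, one_mul, idx, single_zero, zero_add]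

end Monomials

lemma fin_two_eq_single_add_single {e : Fin 2 →₀ ℕ} {a b : ℕ} :
    e = single 0 a + single 1 b ↔ a = e 0 ∧ b = e 1 := by
  constructor
  · rintro rfl; simp
  · rintro ⟨rfl, rfl⟩; ext i; fin_cases i <;> simp

lemma coeff_msubst {σ : Type} {k : ℕ} (a : Fin k → MvPowerSeries σ ℂ)
    (f : MvPowerSeries (Fin k) ℂ) (d : σ →₀ ℕ) :
    coeff d (msubst a f) = ∑' e : Fin k →₀ ℕ, coeff e f * coeff d (∏ i, a i ^ e i) := rfl

lemma coeff_msubst_X_zero_of_one_le_weightedOrder {ρ : MvPowerSeries (Fin 3) ℂ}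
    (hρ : 1 ≤ (ρ - X 2).weightedOrder (Pi.single 1 1)) (G : MvPowerSeries (Fin 2) ℂ)
    (k j : ℕ) :
    coeff (idx k 0 j) (msubst ![X 0, ρ] G) = coeff (single 0 k + single 1 j) G := by
  have hterm (e : Fin 2 →₀ ℕ) : coeff (idx k 0 j) (X 0 ^ e 0 * ρ ^ e 1) =
      if e = single 0 k + single 1 j then 1 else 0 := by
    have hdiff : coeff (idx k 0 j) (X 0 ^ e 0 * ρ ^ e 1 - X 0 ^ e 0 * X 2 ^ e 1) = 0 := by
      refine coeff_eq_zero_of_lt_weightedOrder _ (lt_of_lt_of_le ?_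
        (hρ.trans (weightedOrder_le_of_dvd _ ?_)))
      · simp [weight_single_one_apply, idx.apply_one]
      · rw [← mul_sub]; exact (sub_dvd_pow_sub_pow ρ (X 2) (e 1)).mul_left _
    rw [map_sub, sub_eq_zero, X_zero_pow_mul_X_two_pow, coeff_monomial] at hdiff
    simp [hdiff, idx.eq_iff, fin_two_eq_single_add_single]
  simp only [coeff_msubst, Fin.prod_univ_two, Matrix.cons_val_zero, Matrix.cons_val_one,
    hterm, mul_ite, mul_one, mul_zero]
  rw [tsum_ite_eq]

lemma coeff_msubst_X_one_X_two (f : MvPowerSeries (Fin 2) ℂ) (k l j : ℕ) :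
    coeff (idx k l j) (msubst ![X 1, X 2] f) =
      if k = 0 then coeff (single 0 l + single 1 j) f else 0 := by
  have hterm (e : Fin 2 →₀ ℕ) :
      coeff (idx k l j) (X 1 ^ e 0 * X 2 ^ e 1 : MvPowerSeries (Fin 3) ℂ) =
      if k = 0 then (if e = single 0 l + single 1 j then 1 else 0) else 0 := by
    rw [X_one_pow_mul_X_two_pow, coeff_monomial]
    by_cases hk : k = 0 <;> simp [hk, idx.eq_iff, fin_two_eq_single_add_single]
  simp only [coeff_msubst, Fin.prod_univ_two, Matrix.cons_val_zero, Matrix.cons_val_one,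
    hterm, mul_ite, mul_one, mul_zero]
  split_ifs
  · rw [tsum_ite_eq]
  · exact tsum_zero

lemma one_le_weightedOrder_msubst_X_one_X_two {f : MvPowerSeries (Fin 2) ℂ}
    (hf : coeff 0 f = 0) : 1 ≤ (msubst ![X 1, X 2] f).weightedOrder ![0, 1, 1] := by
  refine nat_le_weightedOrder _ fun d hd => ?_
  have hd0 : d 1 = 0 ∧ d 2 = 0 := by simpa [weight_eq_sum, Fin.sum_univ_three] using hd
  rw [← idx.eta d, hd0.1, hd0.2, coeff_msubst_X_one_X_two]
  simp [hf]

lemma coeff_conj2 (F : MvPowerSeries (Fin 2) ℂ) (d : Fin 2 →₀ ℕ) :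
    coeff d (conj2 F) = starRingEnd ℂ (coeff d F) :=
  coeff_map _ d F

namespace IsDefiningSeries

variable {m : ℕ} {ε : ℤ} {Θ : ℕ → ℕ → PowerSeries ℂ} {ρ : MvPowerSeries (Fin 3) ℂ}

lemma one_le_weightedOrder_sub_X_two (hρ : IsDefiningSeries m ε Θ ρ) :
    1 ≤ (ρ - X 2).weightedOrder (Pi.single 1 1) := by
  refine nat_le_weightedOrder _ fun d hd => ?_
  rw [weight_single_one_apply, Nat.lt_one_iff] at hd
  rw [← idx.eta d, hd, map_sub, hρ, coeff_X, idx.single_two]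
  simp [idx.eq_iff, ite_and]

lemma eq_or_of_coeff_ne_zero (hρ : IsDefiningSeries m ε Θ ρ) {e : Fin 3 →₀ ℕ}
    (he : coeff e ρ ≠ 0) : e 0 = 0 ∧ e 1 = 0 ∧ e 2 = 1 ∨ 1 ≤ e 1 ∧ m ≤ e 2 := by
  have hcoeff := hρ (e 0) (e 1) (e 2)
  rw [idx.eta] at hcoeff
  rw [hcoeff] at he
  split_ifs at he <;> first | exact absurd rfl he | omega

lemma coeff_msubst_eq_zero (hρ : IsDefiningSeries m ε Θ ρ) {A B C : MvPowerSeries (Fin 3) ℂ} (hB : 1 ≤ B.weightedOrder ![0, 1, 1])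
    (hC : 1 ≤ C.weightedOrder ![0, 1, 1]) {j : ℕ} (hCj : coeff (idx 1 0 j) C = 0)
    (hj : j ≤ m) : coeff (idx 1 0 j) (msubst ![A, B, C] ρ) = 0 := by
  rw [coeff_msubst]
  refine (tsum_congr fun e => ?_).trans tsum_zero
  by_cases he : coeff e ρ = 0
  · rw [he, zero_mul]
  simp only [Fin.prod_univ_three, Matrix.cons_val_zero, Matrix.cons_val_one,
    Matrix.cons_val_two, Matrix.tail_cons, Matrix.head_cons]
  rcases hρ.eq_or_of_coeff_ne_zero he with ⟨h0, h1, h2⟩ | ⟨h1, h2⟩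
  · rw [h0, h1, h2, pow_zero, pow_zero, one_mul, one_mul, pow_one, hCj, mul_zero]
  · suffices coeff (idx 1 0 j) (A ^ e 0 * (B ^ e 1 * C ^ e 2)) = 0 by
      rw [mul_assoc, this, mul_zero]
    apply coeff_eq_zero_of_lt_weightedOrder ![0, 1, 1]
    calc ((weight ![0, 1, 1] (idx 1 0 j) : ℕ) : ℕ∞) = j := by
          simp [weight_eq_sum, Fin.sum_univ_three, idx.apply_one, idx.apply_two]
      _ < e 1 + e 2 := by exact_mod_cast (by omega)
      _ ≤ (B ^ e 1).weightedOrder ![0, 1, 1] + (C ^ e 2).weightedOrder ![0, 1, 1] :=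
          add_le_add (nat_le_weightedOrder_pow _ hB _) (nat_le_weightedOrder_pow _ hC _)
      _ ≤ (B ^ e 1 * C ^ e 2).weightedOrder ![0, 1, 1] := le_weightedOrder_mul _
      _ ≤ _ := weightedOrder_le_of_dvd _ (dvd_mul_left _ _)

end IsDefiningSeries

theorem formal_map_Gz_vanishes_to_order_m_plus_one_general
    (m : ℕ) (ε : ℤ)
    (Θ Θs : ℕ → ℕ → PowerSeries ℂ)
    (F G : MvPowerSeries (Fin 2) ℂ) (ρ ρs : MvPowerSeries (Fin 3) ℂ)
    (hρ : IsDefiningSeries m ε Θ ρ) (hρs : IsDefiningSeries m ε Θs ρs)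
    (hF0 : MvPowerSeries.coeff 0 F = 0) (hG0 : MvPowerSeries.coeff 0 G = 0)
    (hmap : MapsInto F G ρ ρs) :
    -- the coefficient of `z w^j` in `G` vanishes for all `j ≤ m`,
    -- i.e. `G_z(0, w) = O(w^{m+1})`
    ∀ j : ℕ, j ≤ m →
      MvPowerSeries.coeff (Finsupp.single 0 1 + Finsupp.single 1 j) G = 0 := by
  intro j hj
  have hcoeff := congrArg (coeff (idx 1 0 j)) hmap
  rwa [coeff_msubst_X_zero_of_one_le_weightedOrder hρ.one_le_weightedOrder_sub_X_two,
    hρs.coeff_msubst_eq_zero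
      (one_le_weightedOrder_msubst_X_one_X_two (by rw [coeff_conj2, hF0, map_zero]))
      (one_le_weightedOrder_msubst_X_one_X_two (by rw [coeff_conj2, hG0, map_zero]))
      (by simp [coeff_msubst_X_one_X_two]) hj] at hcoeff

theorem formal_map_Gz_vanishes_to_order_m_plus_one
    (m : ℕ) (hm : 1 ≤ m) (ε : ℤ) (hε : ε = 1 ∨ ε = -1)
    (Θ Θs : ℕ → ℕ → PowerSeries ℂ)
    (F G : MvPowerSeries (Fin 2) ℂ) (ρ ρs : MvPowerSeries (Fin 3) ℂ)
    (hρ : IsDefiningSeries m ε Θ ρ) (hρs : IsDefiningSeries m ε Θs ρs)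
    (hF0 : MvPowerSeries.coeff 0 F = 0) (hG0 : MvPowerSeries.coeff 0 G = 0)
    (hJac : (Matrix.det
      !![MvPowerSeries.coeff (Finsupp.single 0 1) F,
         MvPowerSeries.coeff (Finsupp.single 1 1) F;
         MvPowerSeries.coeff (Finsupp.single 0 1) G,
         MvPowerSeries.coeff (Finsupp.single 1 1) G]) ≠ 0)
    (hmap : MapsInto F G ρ ρs) :
    -- the coefficient of `z w^j` in `G` vanishes for all `j ≤ m`,
    -- i.e. `G_z(0, w) = O(w^{m+1})`
    ∀ j : ℕ, j ≤ m →
      MvPowerSeries.coeff (Finsupp.single 0 1 + Finsupp.single 1 j) G = 0 :=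
  formal_map_Gz_vanishes_to_order_m_plus_one_general m ε Θ Θs F G ρ ρs hρ hρs hF0 hG0 hmap

end
end

section
/- Let H = (F,G) be a formal transformation with invertible Jacobian mapping an m-infinite type hypersurface in normal form into another such. Then the derivatives \partial^\ell G/\partial w^\ell(0,0) are real for all \ell \le m. -/
/-!
STATEMENT 0. A formal invertible transformation `H = (F, G)` of `(ℂ², 0)` mapping a
hypersurface `M : w = τ + i τ^m (ε z χ + ∑_{k,l≥2} Θ_{kl}(τ) z^k χ^l)` (complexified
defining equation, normal coordinates, `χ = z̄`, `τ = w̄`) into another such hypersurface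
`M*` satisfies `G(z, 0) = 0`, i.e. `G = O(w)`.
-/

noncomputable section

open scoped Classical

/-!
Setting `z = χ = 0` in the mapping identity leaves `G(0, τ) = ρ*(F(0, τ), F̄(0, τ), Ḡ(0, τ))`.
Every monomial of `ρ*` other than `τ` is divisible by `z χ τ^m`, and `F`, `F̄`, `Ḡ` vanish at
the origin, so the right-hand side agrees with `Ḡ(0, τ)` up to order `τ^(m+1)`. Comparing the
coefficients of `τ^ℓ` shows that the coefficient of `w^ℓ` in `G` equals its own conjugate.
-/

namespace MvPowerSeries

variable {σ R S : Type*} [CommSemiring R] [CommSemiring S]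

def restrictVar (s : σ) : MvPowerSeries σ R →+* PowerSeries R where
  toFun f := PowerSeries.mk fun n => coeff (Finsupp.single s n) f
  map_zero' := by ext; simp
  map_add' f g := by ext; simp
  map_one' := by ext n; simp [coeff_one, PowerSeries.coeff_one]
  map_mul' f g := by
    ext n
    simp only [PowerSeries.coeff_mk, PowerSeries.coeff_mul, coeff_mul,
      Finsupp.antidiagonal_single, Finset.sum_map]
    rfl

@[simp]
lemma coeff_restrictVar (s : σ) (f : MvPowerSeries σ R) (n : ℕ) :
    PowerSeries.coeff n (restrictVar s f) = coeff (Finsupp.single s n) f :=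
  PowerSeries.coeff_mk n fun n => coeff (Finsupp.single s n) f

@[simp]
lemma constantCoeff_restrictVar (s : σ) (f : MvPowerSeries σ R) :
    PowerSeries.constantCoeff (restrictVar s f) = constantCoeff f := by
  rw [← PowerSeries.coeff_zero_eq_constantCoeff_apply, coeff_restrictVar,
    Finsupp.single_zero, coeff_zero_eq_constantCoeff_apply]

@[simp]
lemma restrictVar_X_self (s : σ) : restrictVar s (X s : MvPowerSeries σ R) = PowerSeries.X := by
  ext n
  simp [coeff_X, PowerSeries.coeff_X, Finsupp.single_eq_single_iff, eq_comm]

@[simp]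
lemma restrictVar_X_of_ne {s t : σ} (h : t ≠ s) : restrictVar s (X t : MvPowerSeries σ R) = 0 := by
  ext n
  simp [coeff_X, Finsupp.single_eq_single_iff, h.symm]

lemma restrictVar_map (s : σ) (φ : R →+* S) (f : MvPowerSeries σ R) :
    restrictVar s (map φ f) = PowerSeries.map φ (restrictVar s f) := by
  ext n
  simp

end MvPowerSeries

lemma PowerSeries.coeff_prod_pow_eq_zero {ι R : Type*} [CommSemiring R] (s : Finset ι)
    (a : ι → PowerSeries R) (ha : ∀ i ∈ s, constantCoeff (a i) = 0) (e : ι → ℕ) {n : ℕ}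
    (hn : n < ∑ i ∈ s, e i) : coeff n (∏ i ∈ s, a i ^ e i) = 0 := by
  have hdvd : X ^ (∑ i ∈ s, e i) ∣ ∏ i ∈ s, a i ^ e i := by
    rw [← Finset.prod_pow_eq_pow_sum]
    exact Finset.prod_dvd_prod_of_dvd _ _ fun i hi =>
      pow_dvd_pow_of_dvd (X_dvd_iff.mpr (ha i hi)) _
  exact X_pow_dvd_iff.mp hdvd n hn

lemma Matrix.comp_vecCons {α β : Type*} {n : ℕ} (f : α → β) (a : α) (v : Fin n → α) :
    f ∘ vecCons a v = vecCons (f a) (f ∘ v) :=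
  Fin.comp_cons f a v

open MvPowerSeries

def psubst {k : ℕ} (a : Fin k → PowerSeries ℂ) (f : MvPowerSeries (Fin k) ℂ) :
    PowerSeries ℂ :=
  PowerSeries.mk fun n => ∑' e : Fin k →₀ ℕ,
    coeff e f * PowerSeries.coeff n (∏ i, a i ^ e i)

lemma coeff_psubst {k : ℕ} (a : Fin k → PowerSeries ℂ) (f : MvPowerSeries (Fin k) ℂ) (n : ℕ) :
    PowerSeries.coeff n (psubst a f) =
      ∑' e : Fin k →₀ ℕ, coeff e f * PowerSeries.coeff n (∏ i, a i ^ e i) :=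
  PowerSeries.coeff_mk _ _

lemma restrictVar_msubst {σ : Type} (s : σ) {k : ℕ} (a : Fin k → MvPowerSeries σ ℂ)
    (f : MvPowerSeries (Fin k) ℂ) :
    restrictVar s (msubst a f) = psubst (restrictVar s ∘ a) f := by
  ext n
  simp only [coeff_restrictVar, coeff_psubst, Function.comp_apply, ← map_pow, ← map_prod]
  rfl

lemma psubst_zero_X (f : MvPowerSeries (Fin 2) ℂ) :
    psubst ![0, PowerSeries.X] f = restrictVar 1 f := by
  ext n
  rw [coeff_psubst, coeff_restrictVar, tsum_eq_single (Finsupp.single 1 n)]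
  · simp [Fin.prod_univ_two]
  · intro e he
    rcases Nat.eq_zero_or_pos (e 0) with h0 | h0
    · have h1 : e 1 ≠ n := fun h1 => he <| by
        ext i; fin_cases i <;> simp [h0, h1]
      simp [Fin.prod_univ_two, h0, PowerSeries.coeff_X_pow, Ne.symm h1]
    · simp [Fin.prod_univ_two, zero_pow h0.ne']

lemma idx_eq_self (e : Fin 3 →₀ ℕ) : idx (e 0) (e 1) (e 2) = e := by
  ext i
  fin_cases i <;> simp [idx]

namespace IsDefiningSeries

variable {m : ℕ} {ε : ℤ} {Θ : ℕ → ℕ → PowerSeries ℂ} {ρ : MvPowerSeries (Fin 3) ℂ}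

lemma restrictVar_two (hρ : IsDefiningSeries m ε Θ ρ) : restrictVar 2 ρ = PowerSeries.X := by
  ext n
  have h := hρ 0 0 n
  simp only [idx, Finsupp.single_zero, zero_add] at h
  simp [h, PowerSeries.coeff_X]

lemma coeff_eq_zero (hρ : IsDefiningSeries m ε Θ ρ) {e : Fin 3 →₀ ℕ}
    (he : e ≠ Finsupp.single 2 1) (hlow : e 0 = 0 ∨ e 1 = 0 ∨ e 2 < m) : coeff e ρ = 0 := by
  rw [← idx_eq_self e, hρ]
  have he' : ¬ (e 0 = 0 ∧ e 1 = 0 ∧ e 2 = 1) := fun ⟨h0, h1, h2⟩ => he <| by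
    ext i; fin_cases i <;> simp [h0, h1, h2]
  split_ifs <;> first | rfl | omega

lemma coeff_psubst (hρ : IsDefiningSeries m ε Θ ρ) {a b c : PowerSeries ℂ}
    (ha : PowerSeries.constantCoeff a = 0) (hb : PowerSeries.constantCoeff b = 0)
    (hc : PowerSeries.constantCoeff c = 0) {l : ℕ} (hl : l ≤ m + 1) :
    PowerSeries.coeff l (psubst ![a, b, c] ρ) = PowerSeries.coeff l c := by
  rw [_root_.coeff_psubst, tsum_eq_single (Finsupp.single 2 1)]
  · have h1 : coeff (Finsupp.single 2 1) ρ = 1 := by simpa [idx] using hρ 0 0 1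
    simp [h1, Fin.prod_univ_three]
  · intro e he
    by_cases hlow : e 0 = 0 ∨ e 1 = 0 ∨ e 2 < m
    · rw [hρ.coeff_eq_zero he hlow, zero_mul]
    · rw [PowerSeries.coeff_prod_pow_eq_zero _ _ ?_ _ ?_, mul_zero]
      · intro i _
        fin_cases i <;> assumption
      · simp only [Fin.sum_univ_three]
        omega

end IsDefiningSeries

lemma MapsInto.restrictVar_two {m : ℕ} {ε : ℤ} {Θ : ℕ → ℕ → PowerSeries ℂ}
    {F G : MvPowerSeries (Fin 2) ℂ} {ρ ρs : MvPowerSeries (Fin 3) ℂ}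
    (hmap : MapsInto F G ρ ρs) (hρ : IsDefiningSeries m ε Θ ρ) :
    restrictVar 1 G =
      psubst ![restrictVar 1 F, restrictVar 1 (conj2 F), restrictVar 1 (conj2 G)] ρs := by
  simpa only [restrictVar_msubst, Matrix.comp_vecCons, Matrix.empty_eq,
    restrictVar_X_self, ne_eq, Fin.reduceEq, not_false_eq_true, restrictVar_X_of_ne,
    hρ.restrictVar_two, psubst_zero_X] using congrArg (restrictVar 2) hmap

theorem formal_map_transverse_derivatives_real_general
    (m : ℕ) (ε : ℤ)
    (Θ Θs : ℕ → ℕ → PowerSeries ℂ)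
    (F G : MvPowerSeries (Fin 2) ℂ) (ρ ρs : MvPowerSeries (Fin 3) ℂ)
    (hρ : IsDefiningSeries m ε Θ ρ) (hρs : IsDefiningSeries m ε Θs ρs)
    (hF0 : MvPowerSeries.coeff 0 F = 0) (hG0 : MvPowerSeries.coeff 0 G = 0)
    (hmap : MapsInto F G ρ ρs) :
    -- `∂^ℓ G/∂w^ℓ (0,0) = ℓ! ⬝ (coefficient of w^ℓ in G)` is real for all `ℓ ≤ m`
    ∀ l : ℕ, l ≤ m →
      ((l.factorial : ℂ) * MvPowerSeries.coeff (Finsupp.single 1 l) G).im = 0 := by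
  intro l hl
  have hF0' : constantCoeff F = 0 := by rwa [← coeff_zero_eq_constantCoeff_apply]
  have hG0' : constantCoeff G = 0 := by rwa [← coeff_zero_eq_constantCoeff_apply]
  have hrestrict : PowerSeries.coeff l (restrictVar 1 G) =
      PowerSeries.coeff l (restrictVar 1 (conj2 G)) := by
    rw [hmap.restrictVar_two hρ]
    exact hρs.coeff_psubst (by simp [hF0']) (by simp [conj2, hF0'])
      (by simp [conj2, hG0']) (by omega)
  have hreal : (coeff (Finsupp.single 1 l) G).im = 0 := by
    rw [conj2, restrictVar_map, PowerSeries.coeff_map, coeff_restrictVar] at hrestrict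
    exact Complex.conj_eq_iff_im.mp hrestrict.symm
  simp [Complex.mul_im, hreal]

theorem formal_map_transverse_derivatives_real
    (m : ℕ) (hm : 1 ≤ m) (ε : ℤ) (hε : ε = 1 ∨ ε = -1)
    (Θ Θs : ℕ → ℕ → PowerSeries ℂ)
    (F G : MvPowerSeries (Fin 2) ℂ) (ρ ρs : MvPowerSeries (Fin 3) ℂ)
    (hρ : IsDefiningSeries m ε Θ ρ) (hρs : IsDefiningSeries m ε Θs ρs)
    (hF0 : MvPowerSeries.coeff 0 F = 0) (hG0 : MvPowerSeries.coeff 0 G = 0)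
    (hJac : (Matrix.det
      !![MvPowerSeries.coeff (Finsupp.single 0 1) F,
         MvPowerSeries.coeff (Finsupp.single 1 1) F;
         MvPowerSeries.coeff (Finsupp.single 0 1) G,
         MvPowerSeries.coeff (Finsupp.single 1 1) G]) ≠ 0)
    (hmap : MapsInto F G ρ ρs) :
    -- `∂^ℓ G/∂w^ℓ (0,0) = ℓ! ⬝ (coefficient of w^ℓ in G)` is real for all `ℓ ≤ m`
    ∀ l : ℕ, l ≤ m →
      ((l.factorial : ℂ) * MvPowerSeries.coeff (Finsupp.single 1 l) G).im = 0 :=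
  formal_map_transverse_derivatives_real_general m ε Θ Θs F G ρ ρs hρ hρs hF0 hG0 hmap

end
end
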